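/- arXiv:1412.5110 — 2 statements merged into one kernel-verified Lean document; each statement's English description precedes it below -/
import Mathlib

section
/- Suppose Γ is a K-quasiarc, δ ∈ (0,1), and P is a δ-partition of Γ with |P| ≤ N₀/δ for some N₀ > 1. Then there exists N₁ depending only on K and N₀ such that for all δ' ∈ [δ, 1) and all δ'-partitions P' of Γ, we have |P'| ≤ N₁/δ'. -/
/-!
Group the pieces of `P` into blocks of `m = ⌊δ'/δ⌋` consecutive pieces. There are at most
`N/m + 1 ≤ 3N₀/δ'` blocks, and each is an arc of diameter at most `m δ diam Γ ≤ δ' diam Γ`.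
The two-point condition makes the breakpoints `γ(t'ᵢ)` of `P'` `(δ' diam Γ / 2K)`-separated,
and comparing volumes of disjoint balls shows that one block meets at most `(4K + 1)²` of them.
-/

open Metric Set Module MeasureTheory

section Packing

variable {E : Type*} [NormedAddCommGroup E] [NormedSpace ℝ E] [FiniteDimensional ℝ E]

/-- The balls of radius `r / 2` around the points are disjoint and lie in `ball x (R + r / 2)`. -/
theorem card_le_of_pairwise_le_dist {ι : Type*} (s : Finset ι) (p : ι → E) (x : E) {r R : ℝ}
    (hr : 0 < r) (hR : 0 ≤ R) (hsep : (s : Set ι).Pairwise fun i j => r ≤ dist (p i) (p j))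
    (hmem : ∀ i ∈ s, dist (p i) x ≤ R) :
    (s.card : ℝ) ≤ (2 * R / r + 1) ^ finrank ℝ E := by
  borelize E
  set μ : Measure E := Measure.addHaar
  have hdisj : (s : Set ι).PairwiseDisjoint fun i => ball (p i) (r / 2) :=
    fun i hi j hj hij => ball_disjoint_ball (by linarith [hsep hi hj hij])
  have hsub : ⋃ i ∈ s, ball (p i) (r / 2) ⊆ ball x (R + r / 2) :=
    iUnion₂_subset fun i hi => ball_subset (by linarith [hmem i hi])
  have hvol : (s.card : ENNReal) * (ENNReal.ofReal ((r / 2) ^ finrank ℝ E) * μ (ball 0 1)) ≤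
      ENNReal.ofReal ((R + r / 2) ^ finrank ℝ E) * μ (ball 0 1) :=
    calc _ = ∑ i ∈ s, μ (ball (p i) (r / 2)) := by
          simp [Measure.addHaar_ball_of_pos μ _ (half_pos hr)]
      _ = μ (⋃ i ∈ s, ball (p i) (r / 2)) :=
          (measure_biUnion_finset hdisj fun _ _ => measurableSet_ball).symm
      _ ≤ μ (ball x (R + r / 2)) := measure_mono hsub
      _ = _ := Measure.addHaar_ball_of_pos μ _ (by positivity)
  rw [← mul_assoc, ENNReal.mul_le_mul_iff_left (measure_ball_pos μ 0 one_pos).ne'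
    (measure_ball_lt_top (μ := μ)).ne, ← ENNReal.ofReal_natCast,
    ← ENNReal.ofReal_mul (by positivity), ENNReal.ofReal_le_ofReal_iff (by positivity)] at hvol
  have hratio : 2 * R / r + 1 = (R + r / 2) / (r / 2) := by field_simp
  rwa [hratio, div_pow, le_div_iff₀ (by positivity)]

theorem card_le_mul_of_pairwise_le_dist {ι κ : Type*} (s : Finset ι) (p : ι → E)
    (B : Finset κ) (c : κ → E) {r R : ℝ} (hr : 0 < r) (hR : 0 ≤ R)
    (hsep : (s : Set ι).Pairwise fun i j => r ≤ dist (p i) (p j))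
    (hcover : ∀ i ∈ s, ∃ b ∈ B, dist (p i) (c b) ≤ R) :
    (s.card : ℝ) ≤ B.card * (2 * R / r + 1) ^ finrank ℝ E := by
  classical
  set near : κ → Finset ι := fun b => s.filter fun i => dist (p i) (c b) ≤ R
  have hs : s ⊆ B.biUnion near := fun i hi => by
    obtain ⟨b, hb, hib⟩ := hcover i hi
    exact Finset.mem_biUnion.2 ⟨b, hb, Finset.mem_filter.2 ⟨hi, hib⟩⟩
  calc (s.card : ℝ) ≤ ∑ b ∈ B, ((near b).card : ℝ) := by
        exact_mod_cast (Finset.card_le_card hs).trans Finset.card_biUnion_le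
    _ ≤ ∑ _b ∈ B, (2 * R / r + 1) ^ finrank ℝ E := Finset.sum_le_sum fun b _ =>
        card_le_of_pairwise_le_dist _ p (c b) hr hR
          (hsep.mono fun i hi => (Finset.mem_filter.1 hi).1) fun i hi => (Finset.mem_filter.1 hi).2
    _ = _ := by rw [Finset.sum_const, nsmul_eq_mul]

end Packing

theorem exists_mem_Ico_of_mem_Ico {α : Type*} [LinearOrder α] {t : ℕ → α} {x : α} :
    ∀ {N : ℕ}, x ∈ Ico (t 0) (t N) → ∃ j < N, x ∈ Ico (t j) (t (j + 1))
  | 0, hx => absurd hx (by simp)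
  | N + 1, hx => by
    by_cases h : x < t N
    · obtain ⟨j, hj, hxj⟩ := exists_mem_Ico_of_mem_Ico ⟨hx.1, h⟩
      exact ⟨j, by omega, hxj⟩
    · exact ⟨N, N.lt_succ_self, not_lt.1 h, hx.2⟩

theorem monotone_comp_min_of_le_succ {α : Type*} [Preorder α] {t : ℕ → α} {N : ℕ}
    (h : ∀ i < N, t i ≤ t (i + 1)) : Monotone fun j => t (min j N) := by
  refine monotone_nat_of_le_succ fun j => ?_
  rcases lt_or_ge j N with hj | hj
  · simpa [min_eq_left hj.le, min_eq_left (Nat.succ_le_of_lt hj)] using h j hj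
  · simp [min_eq_right hj, min_eq_right (hj.trans j.le_succ)]

section Arcs

variable {X : Type*} [PseudoMetricSpace X]

theorem diam_image_Icc_le_mul (γ : ℝ → X) {u : ℕ → ℝ} (hu : Monotone u) (a : ℕ) {ε : ℝ}
    (hε : ∀ j, diam (γ '' Icc (u j) (u (j + 1))) ≤ ε) :
    ∀ m : ℕ, diam (γ '' Icc (u a) (u (a + m))) ≤ m * ε
  | 0 => by simp
  | m + 1 => by
    have hsplit : Icc (u a) (u (a + (m + 1))) =
        Icc (u a) (u (a + m)) ∪ Icc (u (a + m)) (u (a + m + 1)) :=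
      (Icc_union_Icc_eq_Icc (hu (by omega)) (hu (by omega))).symm
    rw [hsplit, image_union]
    calc _ ≤ diam (γ '' Icc (u a) (u (a + m))) + diam (γ '' Icc (u (a + m)) (u (a + m + 1))) :=
          diam_union' ⟨γ (u (a + m)), ⟨u (a + m), ⟨hu (by omega), le_rfl⟩, rfl⟩,
            ⟨u (a + m), ⟨le_rfl, hu (by omega)⟩, rfl⟩⟩
      _ ≤ m * ε + ε := add_le_add (diam_image_Icc_le_mul γ hu a hε m) (hε _)
      _ = (m + 1 : ℕ) * ε := by push_cast; ring

theorem isBounded_image_Icc_of_continuousOn {γ : ℝ → X} (hγ : ContinuousOn γ (Icc 0 1))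
    {a b : ℝ} (ha : 0 ≤ a) (hb : b ≤ 1) : Bornology.IsBounded (γ '' Icc a b) :=
  (isCompact_Icc.image_of_continuousOn hγ).isBounded.subset (image_mono (Icc_subset_Icc ha hb))

/-- The δ-partition `{γ '' Icc (t i) (t (i + 1)) | i < N}` of the arc `γ '' Icc 0 1`. -/
structure IsDeltaPartition (γ : ℝ → X) (δ : ℝ) (N : ℕ) (t : ℕ → ℝ) : Prop where
  zero : t 0 = 0
  last : t N = 1
  lt_succ : ∀ i < N, t i < t (i + 1)
  diam_image_Icc : ∀ i < N,
    δ / 2 * diam (γ '' Icc 0 1) ≤ diam (γ '' Icc (t i) (t (i + 1))) ∧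
    diam (γ '' Icc (t i) (t (i + 1))) ≤ δ * diam (γ '' Icc 0 1)

namespace IsDeltaPartition

variable {γ : ℝ → X} {δ : ℝ} {N : ℕ} {t : ℕ → ℝ}

-- Continued constantly after `N`, the breakpoints cut every block of `m` consecutive pieces,
-- the last block included, into exactly `m` possibly degenerate pieces.
theorem monotone_clamp (hP : IsDeltaPartition γ δ N t) : Monotone fun j => t (min j N) :=
  monotone_comp_min_of_le_succ fun i hi => (hP.lt_succ i hi).le

theorem clamp_mem_Icc (hP : IsDeltaPartition γ δ N t) (j : ℕ) : t (min j N) ∈ Icc 0 1 := by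
  refine ⟨hP.zero ▸ hP.monotone_clamp (Nat.zero_le j), ?_⟩
  simpa [hP.last] using hP.monotone_clamp (min_le_right j N)

theorem mem_Icc (hP : IsDeltaPartition γ δ N t) {i : ℕ} (hi : i ≤ N) : t i ∈ Icc 0 1 := by
  simpa [min_eq_left hi] using hP.clamp_mem_Icc i

theorem le_of_le (hP : IsDeltaPartition γ δ N t) {i j : ℕ} (hij : i ≤ j) (hj : j ≤ N) :
    t i ≤ t j := by
  simpa [min_eq_left hj, min_eq_left (hij.trans hj)] using hP.monotone_clamp hij

theorem diam_image_Icc_clamp_le (hP : IsDeltaPartition γ δ N t) (hδ : 0 ≤ δ) (j : ℕ) :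
    diam (γ '' Icc (t (min j N)) (t (min (j + 1) N))) ≤ δ * diam (γ '' Icc 0 1) := by
  rcases lt_or_ge j N with hj | hj
  · simpa [min_eq_left hj.le, min_eq_left (Nat.succ_le_of_lt hj)] using
      (hP.diam_image_Icc j hj).2
  · simpa [min_eq_right hj, min_eq_right (hj.trans j.le_succ)] using
      mul_nonneg hδ diam_nonneg

theorem half_mul_diam_le_mul_dist (hP : IsDeltaPartition γ δ N t)
    (hγ : ContinuousOn γ (Icc 0 1)) {K : ℝ}
    (hqc : ∀ a ∈ Icc (0 : ℝ) 1, ∀ b ∈ Icc (0 : ℝ) 1, a ≤ b →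
      diam (γ '' Icc a b) ≤ K * dist (γ a) (γ b))
    {i j : ℕ} (hij : i < j) (hj : j ≤ N) :
    δ / 2 * diam (γ '' Icc 0 1) ≤ K * dist (γ (t i)) (γ (t j)) :=
  calc δ / 2 * diam (γ '' Icc 0 1) ≤ diam (γ '' Icc (t i) (t (i + 1))) :=
        (hP.diam_image_Icc i (by omega)).1
    _ ≤ diam (γ '' Icc (t i) (t j)) :=
        diam_mono (image_mono (Icc_subset_Icc le_rfl (hP.le_of_le hij hj)))
          (isBounded_image_Icc_of_continuousOn hγ (hP.mem_Icc (by omega)).1 (hP.mem_Icc hj).2)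
    _ ≤ K * dist (γ (t i)) (γ (t j)) :=
        hqc _ (hP.mem_Icc (by omega)) _ (hP.mem_Icc hj) (hP.le_of_le hij.le hj)

theorem pairwise_le_dist (hP : IsDeltaPartition γ δ N t) (hγ : ContinuousOn γ (Icc 0 1))
    {K : ℝ} (hK : 0 < K) (hqc : ∀ a ∈ Icc (0 : ℝ) 1, ∀ b ∈ Icc (0 : ℝ) 1, a ≤ b →
      diam (γ '' Icc a b) ≤ K * dist (γ a) (γ b)) :
    ((Finset.range N : Finset ℕ) : Set ℕ).Pairwise
      fun i j => δ * diam (γ '' Icc 0 1) / (2 * K) ≤ dist (γ (t i)) (γ (t j)) := by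
  have hlt : ∀ i j, i < j → j ≤ N →
      δ * diam (γ '' Icc 0 1) / (2 * K) ≤ dist (γ (t i)) (γ (t j)) := by
    intro i j hij hj
    rw [div_le_iff₀ (by positivity)]
    linarith [hP.half_mul_diam_le_mul_dist hγ hqc hij hj]
  intro i hi j hj hij
  simp only [Finset.coe_range, mem_Iio] at hi hj
  rcases hij.lt_or_gt with h | h
  · exact hlt i j h hj.le
  · exact dist_comm (γ (t i)) _ ▸ hlt j i h hi.le

theorem exists_dist_clamp_le (hP : IsDeltaPartition γ δ N t) (hγ : ContinuousOn γ (Icc 0 1))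
    (hδ : 0 ≤ δ) {m : ℕ} (hm : 0 < m) {x : ℝ} (hx : x ∈ Ico 0 1) :
    ∃ b < N / m + 1, dist (γ x) (γ (t (min (b * m) N))) ≤ m * (δ * diam (γ '' Icc 0 1)) := by
  obtain ⟨j, hjN, hxj⟩ := exists_mem_Ico_of_mem_Ico (t := t) (N := N) (by rwa [hP.zero, hP.last])
  refine ⟨j / m, Nat.lt_succ_of_le (Nat.div_le_div_right hjN.le), ?_⟩
  have hT := hP.monotone_clamp
  have hlo : t (min (j / m * m) N) ≤ x := by
    refine (hT (Nat.div_mul_le_self j m)).trans ?_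
    simpa [min_eq_left hjN.le] using hxj.1
  have hhi : x ≤ t (min (j / m * m + m) N) := by
    have := hT (Nat.lt_div_mul_add (a := j) hm)
    simp only [min_eq_left (Nat.succ_le_of_lt hjN)] at this
    exact hxj.2.le.trans this
  calc dist (γ x) (γ (t (min (j / m * m) N)))
      ≤ diam (γ '' Icc (t (min (j / m * m) N)) (t (min (j / m * m + m) N))) :=
        dist_le_diam_of_mem (isBounded_image_Icc_of_continuousOn hγ (hP.clamp_mem_Icc _).1
          (hP.clamp_mem_Icc _).2) ⟨x, ⟨hlo, hhi⟩, rfl⟩ ⟨_, ⟨le_rfl, hT (by omega)⟩, rfl⟩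
    _ ≤ m * (δ * diam (γ '' Icc 0 1)) :=
        diam_image_Icc_le_mul γ hT _ (hP.diam_image_Icc_clamp_le hδ) m

end IsDeltaPartition

end Arcs

theorem IsDeltaPartition.card_le {E : Type*} [NormedAddCommGroup E] [NormedSpace ℝ E]
    [FiniteDimensional ℝ E] {γ : ℝ → E} {K δ δ' : ℝ} {N N' : ℕ} {t t' : ℕ → ℝ}
    (hγ : ContinuousOn γ (Icc 0 1)) (hγ01 : γ 0 ≠ γ 1) (hK : 0 < K)
    (hqc : ∀ a ∈ Icc (0 : ℝ) 1, ∀ b ∈ Icc (0 : ℝ) 1, a ≤ b →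
      diam (γ '' Icc a b) ≤ K * dist (γ a) (γ b))
    (hδ : 0 < δ) (hδδ' : δ ≤ δ') (hP : IsDeltaPartition γ δ N t)
    (hP' : IsDeltaPartition γ δ' N' t') :
    (N' : ℝ) ≤ (2 * N * δ / δ' + 1) * (4 * K + 1) ^ finrank ℝ E := by
  set D := diam (γ '' Icc 0 1)
  have hD : 0 < D := (dist_pos.2 hγ01).trans_le <| dist_le_diam_of_mem
    (isBounded_image_Icc_of_continuousOn hγ le_rfl le_rfl) ⟨0, by simp, rfl⟩ ⟨1, by simp, rfl⟩
  have hδ' : 0 < δ' := hδ.trans_le hδδ'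
  set m := ⌊δ' / δ⌋₊
  have hm : 0 < m := Nat.floor_pos.2 ((one_le_div hδ).2 hδδ')
  have hmδ : m * δ ≤ δ' := (le_div_iff₀ hδ).1 (Nat.floor_le (by positivity))
  have hδ'm : δ' ≤ 2 * m * δ := by
    have := (div_lt_iff₀ hδ).1 (Nat.lt_floor_add_one (δ' / δ))
    have : (1 : ℝ) ≤ m := by exact_mod_cast hm
    nlinarith
  have hcover : ∀ i ∈ Finset.range N', ∃ b ∈ Finset.range (N / m + 1),
      dist (γ (t' i)) (γ (t (min (b * m) N))) ≤ m * (δ * D) := by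
    intro i hi
    have hi : i < N' := Finset.mem_range.1 hi
    obtain ⟨b, hb, hdist⟩ := hP.exists_dist_clamp_le hγ hδ.le hm ⟨(hP'.mem_Icc hi.le).1,
      ((hP'.lt_succ i hi).trans_le (hP'.le_of_le hi le_rfl)).trans_eq hP'.last⟩
    exact ⟨b, Finset.mem_range.2 hb, hdist⟩
  have hcount := card_le_mul_of_pairwise_le_dist _ _ _ _ (by positivity) (by positivity)
    (hP'.pairwise_le_dist hγ hK hqc) hcover
  rw [Finset.card_range, Finset.card_range] at hcount
  refine hcount.trans (mul_le_mul ?_ (pow_le_pow_left₀ (by positivity) ?_ _) (by positivity)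
    (by positivity))
  · have : ((N / m : ℕ) : ℝ) ≤ N / m := Nat.cast_div_le
    have : (N : ℝ) / m ≤ 2 * N * δ / δ' := by
      rw [div_le_div_iff₀ (by positivity) hδ']
      nlinarith [N.cast_nonneg (α := ℝ)]
    push_cast
    linarith
  · rw [div_div_eq_mul_div, add_le_add_iff_right, div_le_iff₀ (by positivity)]
    nlinarith [mul_le_mul_of_nonneg_left hmδ (by positivity : 0 ≤ 4 * K * D)]

/-- If `Γ` is a `K`-quasiarc, `δ ∈ (0,1)` and some `δ`-partition `P` of `Γ`
has `|P| ≤ N₀/δ`, then there is `N₁` depending only on `K, N₀` such that every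
`δ'`-partition `P'` of `Γ` with `δ' ∈ [δ,1)` has `|P'| ≤ N₁/δ'`. -/
theorem delta_partition_card_propagates :
    ∀ K N₀ : ℝ, 1 < K → 1 < N₀ → ∃ N₁ : ℝ, 0 < N₁ ∧
      ∀ γ : ℝ → EuclideanSpace ℝ (Fin 2),
        ContinuousOn γ (Set.Icc 0 1) →
        Set.InjOn γ (Set.Icc 0 1) →
        (∀ a ∈ Set.Icc (0 : ℝ) 1, ∀ b ∈ Set.Icc (0 : ℝ) 1, a ≤ b →
          diam (γ '' Set.Icc a b) ≤ K * dist (γ a) (γ b)) →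
        ∀ δ : ℝ, δ ∈ Set.Ioo (0 : ℝ) 1 →
        ∀ (N : ℕ) (t : ℕ → ℝ), 0 < N → t 0 = 0 → t N = 1 →
          (∀ i < N, t i < t (i + 1)) →
          (∀ i < N,
            δ / 2 * diam (γ '' Set.Icc 0 1) ≤ diam (γ '' Set.Icc (t i) (t (i + 1))) ∧
            diam (γ '' Set.Icc (t i) (t (i + 1))) ≤ δ * diam (γ '' Set.Icc 0 1)) →
          (N : ℝ) ≤ N₀ / δ →
        ∀ δ' : ℝ, δ ≤ δ' → δ' < 1 →
        ∀ (N' : ℕ) (t' : ℕ → ℝ), 0 < N' → t' 0 = 0 → t' N' = 1 →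
          (∀ i < N', t' i < t' (i + 1)) →
          (∀ i < N',
            δ' / 2 * diam (γ '' Set.Icc 0 1) ≤ diam (γ '' Set.Icc (t' i) (t' (i + 1))) ∧
            diam (γ '' Set.Icc (t' i) (t' (i + 1))) ≤ δ' * diam (γ '' Set.Icc 0 1)) →
          (N' : ℝ) ≤ N₁ / δ' := by
  intro K N₀ hK hN₀
  refine ⟨3 * N₀ * (4 * K + 1) ^ 2, by positivity, ?_⟩
  intro γ hγ hinj hqc δ hδ N t _ ht0 htN hlt hdiam hN δ' hδδ' hδ'1 N' t' _ ht'0 ht'N hlt' hdiam'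
  have hγ01 : γ 0 ≠ γ 1 := fun h => zero_ne_one (hinj (by simp) (by simp) h)
  have hcard := IsDeltaPartition.card_le hγ hγ01 (by linarith) hqc hδ.1 hδδ'
    ⟨ht0, htN, hlt, hdiam⟩ ⟨ht'0, ht'N, hlt', hdiam'⟩
  rw [finrank_euclideanSpace_fin] at hcard
  have hδ' : 0 < δ' := hδ.1.trans_le hδδ'
  have hNδ : N * δ ≤ N₀ := (le_div_iff₀ hδ.1).1 hN
  have hfactor : 2 * N * δ / δ' + 1 ≤ 3 * N₀ / δ' := by
    rw [div_add_one hδ'.ne', div_le_div_iff_of_pos_right hδ']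
    linarith
  calc (N' : ℝ) ≤ (2 * N * δ / δ' + 1) * (4 * K + 1) ^ 2 := hcard
    _ ≤ 3 * N₀ / δ' * (4 * K + 1) ^ 2 := by gcongr
    _ = 3 * N₀ * (4 * K + 1) ^ 2 / δ' := by ring
end

section
/- Let Γ be a K-quasicircle satisfying the weak chord-arc property with constant M₀. Then for α = 1/2 there exists M_{1/2} > 1 depending only on K, M₀ such that for every subarc Γ' ⊂ Γ with diam(Γ') < 1 and every (diam Γ')-partition P of Γ' (i.e., a (diam Γ')^{(1/α)−1}-partition with α = 1/2 is exactly a diam(Γ')-partition), M(Γ',P) ≤ M_{1/2}. More generally, for every α ∈ [1/2,1) there exists M_α depending only on K, M₀, α such that every (diam Γ')^{(1/α)−1}-partition P of any subarc Γ' with diam(Γ') < 1 satisfies M(Γ',P) ≤ M_α. -/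
/-!
Let `d` be the diameter of the subarc and compare the given partition `t`, whose pieces have
diameter at least `ρ = d ^ (1/α - 1) d / 2`, with a partition `s` given by the weak chord-arc
property, whose pieces have diameter at most `d²`. Each piece of `t` is covered by a consecutive
block of pieces of `s`, so its diameter is at most the sum of theirs. By the 2-point condition,
distinct points of `t` are `ρ / K`-separated, since both arcs joining them contain a whole piece
of `t`; a volume argument then bounds the number of points of `t` in a piece of `s` by
`(2 K d² / ρ + 1)² ≤ (4 K + 1)²`, using `d ≤ d ^ (1/α - 1)`. Hence every piece of `s` is charged
at most `(4 K + 1)² + 1` times, and the index `M(Γ', t)` is at most `((4 K + 1)² + 1) M₀`.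
-/

open Metric Set Bornology MeasureTheory Module
open scoped Finset ENNReal

theorem card_le_pow_of_separated {E ι : Type*} [NormedAddCommGroup E] [NormedSpace ℝ E]
    [FiniteDimensional ℝ E] (T : Finset ι) (x : ι → E) {ε R : ℝ} (hε : 0 < ε) (hR : 0 ≤ R)
    (hsep : (T : Set ι).Pairwise fun i j => ε ≤ dist (x i) (x j))
    (hdist : ∀ i ∈ T, ∀ j ∈ T, dist (x i) (x j) ≤ R) :
    (#T : ℝ) ≤ (2 * R / ε + 1) ^ finrank ℝ E := by
  obtain rfl | ⟨i₀, hi₀⟩ := T.eq_empty_or_nonempty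
  · simp only [Finset.card_empty, Nat.cast_zero]; positivity
  borelize E
  let μ : Measure E := Measure.addHaar
  have hδ : 0 < ε / 2 := half_pos hε
  have hdisj : (T : Set ι).PairwiseDisjoint fun i => ball (x i) (ε / 2) := fun i hi j hj hij =>
    ball_disjoint_ball (by linarith [hsep hi hj hij])
  have hsub : (⋃ i ∈ T, ball (x i) (ε / 2)) ⊆ ball (x i₀) (R + ε / 2) :=
    iUnion₂_subset fun i hi => ball_subset_ball' (by linarith [hdist i hi i₀ hi₀])
  have hvol : (#T : ℝ≥0∞) * ENNReal.ofReal ((ε / 2) ^ finrank ℝ E) * μ (ball 0 1) ≤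
      ENNReal.ofReal ((R + ε / 2) ^ finrank ℝ E) * μ (ball 0 1) :=
    calc (#T : ℝ≥0∞) * ENNReal.ofReal ((ε / 2) ^ finrank ℝ E) * μ (ball 0 1)
        = μ (⋃ i ∈ T, ball (x i) (ε / 2)) := by
          rw [measure_biUnion_finset hdisj fun i _ => measurableSet_ball]
          simp only [μ.addHaar_ball_of_pos _ hδ, Finset.sum_const, nsmul_eq_mul, mul_assoc]
      _ ≤ μ (ball (x i₀) (R + ε / 2)) := measure_mono hsub
      _ = ENNReal.ofReal ((R + ε / 2) ^ finrank ℝ E) * μ (ball 0 1) :=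
          μ.addHaar_ball_of_pos _ (by positivity)
  have hvol' := (ENNReal.mul_le_mul_iff_left (measure_ball_pos μ (0 : E) one_pos).ne'
    measure_ball_lt_top.ne).1 hvol
  rw [← ENNReal.ofReal_natCast, ← ENNReal.ofReal_mul (by positivity),
    ENNReal.ofReal_le_ofReal_iff (by positivity)] at hvol'
  calc (#T : ℝ) = #T * (ε / 2) ^ finrank ℝ E / (ε / 2) ^ finrank ℝ E := by field_simp
    _ ≤ (R + ε / 2) ^ finrank ℝ E / (ε / 2) ^ finrank ℝ E := by gcongr
    _ = (2 * R / ε + 1) ^ finrank ℝ E := by rw [← div_pow]; congr 1; field_simp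

section PseudoMetricSpace

variable {X : Type*} [PseudoMetricSpace X]

def piece (γ : ℝ → X) (t : ℕ → ℝ) (i : ℕ) : Set X := γ '' Icc (t i) (t (i + 1))

def TwoPointCondition (γ : ℝ → X) (K : ℝ) : Prop :=
  ∀ a b : ℝ, 0 ≤ a → a ≤ b → b ≤ 1 →
    min (diam (γ '' Icc a b)) (diam (γ '' (Icc 0 a ∪ Icc b 1))) ≤ K * dist (γ a) (γ b)

theorem diam_image_Icc_le_sum_diam_piece (γ : ℝ → X) {s : ℕ → ℝ} {p q : ℕ} (hpq : p ≤ q)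
    (hs : MonotoneOn s (Icc p q)) :
    diam (γ '' Icc (s p) (s q)) ≤ ∑ j ∈ Finset.Ico p q, diam (piece γ s j) := by
  induction q, hpq using Nat.le_induction with
  | base => simp
  | succ q hpq ih =>
    have h₁ : s p ≤ s q := hs ⟨le_rfl, by omega⟩ ⟨hpq, by omega⟩ hpq
    have h₂ : s q ≤ s (q + 1) := hs ⟨hpq, by omega⟩ ⟨by omega, le_rfl⟩ (by omega)
    rw [← Icc_union_Icc_eq_Icc h₁ h₂, image_union, Finset.sum_Ico_succ_top hpq]
    refine (diam_union' ⟨γ (s q), mem_image_of_mem γ (right_mem_Icc.2 h₁),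
      mem_image_of_mem γ (left_mem_Icc.2 h₂)⟩).trans (add_le_add_left ?_ _)
    exact ih (hs.mono (Icc_subset_Icc_right (by omega)))

noncomputable def pieceIndex (s : ℕ → ℝ) (n : ℕ) (x : ℝ) : ℕ :=
  Nat.findGreatest (fun j => s j ≤ x) (n - 1)

section pieceIndex

variable {s : ℕ → ℝ} {n : ℕ} {x : ℝ}

theorem pieceIndex_lt (hn : 0 < n) : pieceIndex s n x < n :=
  (Nat.findGreatest_le _).trans_lt (Nat.sub_lt hn one_pos)

theorem apply_pieceIndex_le (hx : s 0 ≤ x) : s (pieceIndex s n x) ≤ x :=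
  Nat.findGreatest_spec (P := fun j => s j ≤ x) (Nat.zero_le _) hx

theorem le_apply_pieceIndex_succ (hn : 0 < n) (hx : x ≤ s n) : x ≤ s (pieceIndex s n x + 1) := by
  by_cases hlast : pieceIndex s n x + 1 ≤ n - 1
  · by_contra! hlt
    have := Nat.le_findGreatest (P := fun j => s j ≤ x) hlast hlt.le
    exact (Nat.lt_succ_self _).not_ge this
  · rwa [show pieceIndex s n x + 1 = n by have := pieceIndex_lt (s := s) (x := x) hn; omega]

theorem pieceIndex_mono : Monotone (pieceIndex s n) := fun _ _ hxy =>
  Nat.findGreatest_mono_left (fun _ hj => hj.trans hxy) _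

end pieceIndex

theorem sum_le_mul_sum_of_le_sum_Icc {f c : ℕ → ℝ} {J : ℕ → ℕ} {N n : ℕ} {P : ℝ}
    (hc : ∀ j < n, 0 ≤ c j) (hJ : ∀ i < N, J (i + 1) < n)
    (hf : ∀ i < N, f i ≤ ∑ j ∈ Finset.Icc (J i) (J (i + 1)), c j)
    (hmult : ∀ j < n, (#{i ∈ Finset.range N | J i ≤ j ∧ j ≤ J (i + 1)} : ℝ) ≤ P) :
    ∑ i ∈ Finset.range N, f i ≤ P * ∑ j ∈ Finset.range n, c j := by
  have hIcc : ∀ i < N,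
      Finset.Icc (J i) (J (i + 1)) = {j ∈ Finset.range n | J i ≤ j ∧ j ≤ J (i + 1)} := by
    intro i hi
    ext j
    simp only [Finset.mem_Icc, Finset.mem_filter, Finset.mem_range]
    exact ⟨fun h => ⟨h.2.trans_lt (hJ i hi), h⟩, And.right⟩
  calc ∑ i ∈ Finset.range N, f i
      ≤ ∑ i ∈ Finset.range N, ∑ j ∈ {j ∈ Finset.range n | J i ≤ j ∧ j ≤ J (i + 1)}, c j :=
        Finset.sum_le_sum fun i hi => by
          rw [← hIcc i (Finset.mem_range.1 hi)]; exact hf i (Finset.mem_range.1 hi)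
    _ = ∑ j ∈ Finset.range n, ∑ _i ∈ {i ∈ Finset.range N | J i ≤ j ∧ j ≤ J (i + 1)}, c j :=
        Finset.sum_comm' fun i j => by simp only [Finset.mem_filter, Finset.mem_range]; tauto
    _ ≤ ∑ j ∈ Finset.range n, P * c j := by
        refine Finset.sum_le_sum fun j hj => ?_
        rw [Finset.sum_const, nsmul_eq_mul]
        rw [Finset.mem_range] at hj
        exact mul_le_mul_of_nonneg_right (hmult j hj) (hc j hj)
    _ = P * ∑ j ∈ Finset.range n, c j := (Finset.mul_sum _ _ _).symm

theorem card_filter_le_card_filter_eq_add_one {J : ℕ → ℕ} {N : ℕ} (hJ : MonotoneOn J (Iic N))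
    (j : ℕ) :
    #{i ∈ Finset.range N | J i ≤ j ∧ j ≤ J (i + 1)} ≤ #{i ∈ Finset.range N | J i = j} + 1 := by
  have hcross : #{i ∈ Finset.range N | J i < j ∧ j ≤ J (i + 1)} ≤ 1 := by
    refine Finset.card_le_one.2 fun i hi i' hi' => ?_
    simp only [Finset.mem_filter, Finset.mem_range] at hi hi'
    have hle : ∀ k l, k < l → l < N → J (k + 1) ≤ J l := fun k l hkl hlN =>
      hJ (mem_Iic.2 (by omega)) (mem_Iic.2 hlN.le) hkl
    by_contra hne
    rcases Nat.lt_or_gt_of_ne hne with h | h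
    · have := hle i i' h hi'.1
      omega
    · have := hle i' i h hi.1
      omega
  calc #{i ∈ Finset.range N | J i ≤ j ∧ j ≤ J (i + 1)}
      ≤ #({i ∈ Finset.range N | J i = j} ∪ {i ∈ Finset.range N | J i < j ∧ j ≤ J (i + 1)}) := by
        refine Finset.card_le_card fun i hi => ?_
        simp only [Finset.mem_filter, Finset.mem_union] at hi ⊢
        obtain ⟨hi, hle, hj⟩ := hi
        exact hle.eq_or_lt.imp (fun h => ⟨hi, h⟩) fun h => ⟨hi, h, hj⟩
    _ ≤ _ := (Finset.card_union_le _ _).trans (by omega)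

theorem le_mul_dist_of_twoPointCondition {γ : ℝ → X} {K ρ : ℝ}
    (hbdd : IsBounded (γ '' Icc 0 1)) (htwo : TwoPointCondition γ K) {N : ℕ} {t : ℕ → ℝ}
    (ht : MonotoneOn t (Iic N)) (ht0 : 0 ≤ t 0) (htN : t N ≤ 1)
    (hfine : ∀ i < N, ρ ≤ diam (piece γ t i)) {i i' : ℕ} (hii' : i < i') (hi'N : i' < N) :
    ρ ≤ K * dist (γ (t i)) (γ (t i')) := by
  have hle : ∀ k l, k ≤ l → l ≤ N → t k ≤ t l := fun k l hkl hlN =>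
    ht (mem_Iic.2 (hkl.trans hlN)) (mem_Iic.2 hlN) hkl
  have h0 : ∀ k ≤ N, 0 ≤ t k := fun k hk => ht0.trans (hle 0 k k.zero_le hk)
  have h1 : ∀ k ≤ N, t k ≤ 1 := fun k hk => (hle k N hk le_rfl).trans htN
  have hinner : ρ ≤ diam (γ '' Icc (t i) (t i')) :=
    (hfine i (hii'.trans hi'N)).trans <| diam_mono
      (image_mono (Icc_subset_Icc_right (hle _ _ hii' hi'N.le)))
      (hbdd.subset (image_mono (Icc_subset_Icc (h0 i (by omega)) (h1 i' hi'N.le))))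
  have houter : ρ ≤ diam (γ '' (Icc 0 (t i) ∪ Icc (t i') 1)) :=
    (hfine i' hi'N).trans <| diam_mono
      (image_mono (subset_union_of_subset_right (Icc_subset_Icc_right (h1 _ hi'N)) _))
      (hbdd.subset (image_mono (union_subset (Icc_subset_Icc_right (h1 i (by omega)))
        (Icc_subset_Icc_left (h0 i' hi'N.le)))))
  exact (le_min hinner houter).trans (htwo _ _ (h0 i (by omega)) (hle _ _ hii'.le hi'N.le)
    (h1 i' hi'N.le))

end PseudoMetricSpace

section FiniteDimensional

variable {E : Type*} [NormedAddCommGroup E] [NormedSpace ℝ E] [FiniteDimensional ℝ E]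

theorem card_le_of_twoPointCondition {γ : ℝ → E} {K ρ R : ℝ} (hK : 0 < K) (hρ : 0 < ρ)
    (hbdd : IsBounded (γ '' Icc 0 1)) (htwo : TwoPointCondition γ K) {N : ℕ} {t : ℕ → ℝ}
    (ht : MonotoneOn t (Iic N)) (ht0 : 0 ≤ t 0) (htN : t N ≤ 1)
    (hfine : ∀ i < N, ρ ≤ diam (piece γ t i)) {T : Finset ℕ} (hT : T ⊆ Finset.range N)
    {S : Set E} (hS : IsBounded S) (hSR : diam S ≤ R) (hTS : ∀ i ∈ T, γ (t i) ∈ S) :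
    (#T : ℝ) ≤ (2 * K * R / ρ + 1) ^ finrank ℝ E := by
  have hsep : ∀ i ∈ T, ∀ i' ∈ T, i < i' → ρ / K ≤ dist (γ (t i)) (γ (t i')) :=
    fun i _ i' hi' hii' => (div_le_iff₀' hK).2 <|
      le_mul_dist_of_twoPointCondition hbdd htwo ht ht0 htN hfine hii'
        (Finset.mem_range.1 (hT hi'))
  have hcard := card_le_pow_of_separated T (fun i => γ (t i)) (div_pos hρ hK)
    (diam_nonneg.trans hSR)
    (fun i hi i' hi' hne => hne.lt_or_gt.elim (hsep i hi i' hi')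
      fun h => (hsep i' hi' i hi h).trans_eq (dist_comm _ _))
    (fun i hi i' hi' => (dist_le_diam_of_mem hS (hTS i hi) (hTS i' hi')).trans hSR)
  rwa [div_div_eq_mul_div, mul_right_comm] at hcard

theorem sum_diam_piece_le_of_twoPointCondition {γ : ℝ → E} {K ρ R : ℝ} (hK : 0 < K)
    (hρ : 0 < ρ) (hbdd : IsBounded (γ '' Icc 0 1)) (htwo : TwoPointCondition γ K) {a b : ℝ}
    (ha : 0 ≤ a) (hb : b ≤ 1) {N n : ℕ} {t s : ℕ → ℝ} (ht : MonotoneOn t (Iic N))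
    (ht0 : t 0 = a) (htN : t N = b) (hs : MonotoneOn s (Iic n)) (hs0 : s 0 = a) (hsN : s n = b)
    (hn : 0 < n) (hfine : ∀ i < N, ρ ≤ diam (piece γ t i))
    (hcoarse : ∀ j < n, diam (piece γ s j) ≤ R) :
    ∑ i ∈ Finset.range N, diam (piece γ t i) ≤
      ((2 * K * R / ρ + 1) ^ finrank ℝ E + 1) * ∑ j ∈ Finset.range n, diam (piece γ s j) := by
  set J : ℕ → ℕ := fun i => pieceIndex s n (t i)
  have ht_mem : ∀ i ≤ N, t i ∈ Icc a b := fun i hi =>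
    ⟨ht0 ▸ ht (mem_Iic.2 N.zero_le) (mem_Iic.2 hi) i.zero_le,
      htN ▸ ht (mem_Iic.2 hi) (mem_Iic.2 le_rfl) hi⟩
  have hs_le : ∀ j k, j ≤ k → k ≤ n → s j ≤ s k := fun j k hjk hkn =>
    hs (mem_Iic.2 (hjk.trans hkn)) (mem_Iic.2 hkn) hjk
  have hbdd_s : ∀ j k, j ≤ k → k ≤ n → IsBounded (γ '' Icc (s j) (s k)) := fun j k hjk hk =>
    hbdd.subset <| image_mono <| Icc_subset_Icc
      (ha.trans (hs0 ▸ hs_le 0 j j.zero_le (hjk.trans hk))) ((hs_le k n hk le_rfl).trans (hsN ▸ hb))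
  have hJ_mem : ∀ i ≤ N, t i ∈ Icc (s (J i)) (s (J i + 1)) := fun i hi =>
    ⟨apply_pieceIndex_le (hs0 ▸ (ht_mem i hi).1),
      le_apply_pieceIndex_succ hn (hsN ▸ (ht_mem i hi).2)⟩
  have hJ_mono : MonotoneOn J (Iic N) := pieceIndex_mono.comp_monotoneOn ht
  refine sum_le_mul_sum_of_le_sum_Icc (J := J) (fun j _ => diam_nonneg)
    (fun i _ => pieceIndex_lt hn) (fun i hi => ?_) (fun j hj => ?_)
  · have hJJ : J i ≤ J (i + 1) := hJ_mono (mem_Iic.2 (by omega)) (mem_Iic.2 hi) (by omega)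
    calc diam (piece γ t i) ≤ diam (γ '' Icc (s (J i)) (s (J (i + 1) + 1))) :=
          diam_mono (image_mono (Icc_subset_Icc (hJ_mem i hi.le).1 (hJ_mem (i + 1) hi).2))
            (hbdd_s _ _ (by omega) (pieceIndex_lt hn))
      _ ≤ ∑ j ∈ Finset.Ico (J i) (J (i + 1) + 1), diam (piece γ s j) :=
          diam_image_Icc_le_sum_diam_piece γ (by omega)
            (hs.mono (Icc_subset_Iic_self.trans (Iic_subset_Iic.2 (pieceIndex_lt hn))))
      _ = ∑ j ∈ Finset.Icc (J i) (J (i + 1)), diam (piece γ s j) := by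
          rw [Finset.Ico_add_one_right_eq_Icc]
  · have hpack := card_le_of_twoPointCondition hK hρ hbdd htwo ht (ha.trans_eq ht0.symm)
      (htN.trans_le hb) hfine (Finset.filter_subset _ _) (hbdd_s j (j + 1) (by omega) hj)
      (hcoarse j hj)
      (T := {i ∈ Finset.range N | J i = j}) fun i hi => by
        simp only [Finset.mem_filter, Finset.mem_range] at hi
        exact mem_image_of_mem γ (hi.2 ▸ hJ_mem i hi.1.le)
    have hcount := card_filter_le_card_filter_eq_add_one hJ_mono j
    calc (#{i ∈ Finset.range N | J i ≤ j ∧ j ≤ J (i + 1)} : ℝ)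
        ≤ #{i ∈ Finset.range N | J i = j} + 1 := by exact_mod_cast hcount
      _ ≤ _ := by gcongr

end FiniteDimensional

/-- Let `Γ` be a `K`-quasicircle with the weak chord-arc property with
constant `M₀`. For every `α ∈ [1/2,1)` there is `M_α > 1` depending only on `K, M₀, α`
such that every `(diam Γ')^{1/α − 1}`-partition `P` of any subarc `Γ'` with
`diam Γ' < 1` satisfies `M(Γ',P) ≤ M_α` (for `α = 1/2` these are exactly
the `diam Γ'`-partitions). -/
theorem weak_chord_arc_strong_form :
    ∀ K M₀ α : ℝ, 1 < K → 1 < M₀ → 1 / 2 ≤ α → α < 1 →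
    ∃ Mα : ℝ, 1 < Mα ∧
      ∀ γ : ℝ → EuclideanSpace ℝ (Fin 2),
        ContinuousOn γ (Set.Icc 0 1) →
        Set.InjOn γ (Set.Ico 0 1) →
        γ 0 = γ 1 →
        -- 2-point (quasicircle) condition with constant K
        (∀ a b : ℝ, 0 ≤ a → a ≤ b → b ≤ 1 →
          min (diam (γ '' Set.Icc a b)) (diam (γ '' (Set.Icc 0 a ∪ Set.Icc b 1))) ≤
            K * dist (γ a) (γ b)) →
        -- weak chord-arc property with constant M₀
        (∀ a b : ℝ, 0 ≤ a → a < b → b ≤ 1 → diam (γ '' Set.Icc a b) < 1 →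
          ∃ (N : ℕ) (t : ℕ → ℝ), 0 < N ∧ t 0 = a ∧ t N = b ∧
            (∀ i < N, t i < t (i + 1)) ∧
            (∀ i < N,
              diam (γ '' Set.Icc a b) / 2 * diam (γ '' Set.Icc a b) ≤
                diam (γ '' Set.Icc (t i) (t (i + 1))) ∧
              diam (γ '' Set.Icc (t i) (t (i + 1))) ≤
                diam (γ '' Set.Icc a b) * diam (γ '' Set.Icc a b)) ∧
            (∑ i ∈ Finset.range N, diam (γ '' Set.Icc (t i) (t (i + 1)))) /
                diam (γ '' Set.Icc a b) ≤ M₀) →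
        -- conclusion: every (diam Γ')^{1/α − 1}-partition of a subarc has index ≤ Mα
        ∀ a b : ℝ, 0 ≤ a → a < b → b ≤ 1 → diam (γ '' Set.Icc a b) < 1 →
          ∀ (N : ℕ) (t : ℕ → ℝ), 0 < N → t 0 = a → t N = b →
            (∀ i < N, t i < t (i + 1)) →
            (∀ i < N,
              diam (γ '' Set.Icc a b) ^ (1 / α - 1) / 2 * diam (γ '' Set.Icc a b) ≤
                diam (γ '' Set.Icc (t i) (t (i + 1))) ∧
              diam (γ '' Set.Icc (t i) (t (i + 1))) ≤
                diam (γ '' Set.Icc a b) ^ (1 / α - 1) * diam (γ '' Set.Icc a b)) →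
            (∑ i ∈ Finset.range N, diam (γ '' Set.Icc (t i) (t (i + 1)))) /
                diam (γ '' Set.Icc a b) ≤ Mα := by
  intro K M₀ α hK hM₀ hα₁ hα₂
  refine ⟨((4 * K + 1) ^ 2 + 1) * M₀, by nlinarith, ?_⟩
  intro γ hγ _ _ htwo hweak a b ha hab hb hd1 N t _ ht0 htN ht hfine
  obtain ⟨n, s, hn, hs0, hsn, hs, hcoarse, hsum⟩ := hweak a b ha hab hb hd1
  set d := diam (γ '' Set.Icc a b)
  obtain hd0 | hd0 := (diam_nonneg : 0 ≤ d).eq_or_lt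
  · rw [show d = 0 from hd0.symm, div_zero]
    positivity
  have hd_le : d ≤ d ^ (1 / α - 1) :=
    Real.self_le_rpow_of_le_one hd0.le hd1.le
      (by rw [sub_le_iff_le_add, div_le_iff₀ (by linarith)]; linarith)
  have hρ : 0 < d ^ (1 / α - 1) / 2 * d := by positivity
  have hratio : 2 * K * (d * d) / (d ^ (1 / α - 1) / 2 * d) ≤ 4 * K := by
    rw [div_le_iff₀ hρ]
    nlinarith [mul_le_mul_of_nonneg_left hd_le (by positivity : 0 ≤ 2 * K * d)]
  have hcmp := sum_diam_piece_le_of_twoPointCondition (R := d * d) (by linarith) hρ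
    (isCompact_Icc.image_of_continuousOn hγ).isBounded htwo ha hb
    (strictMonoOn_Iic_of_lt_succ ht).monotoneOn ht0 htN
    (strictMonoOn_Iic_of_lt_succ hs).monotoneOn hs0 hsn hn
    (fun i hi => (hfine i hi).1) (fun j hj => (hcoarse j hj).2)
  rw [finrank_euclideanSpace_fin] at hcmp
  rw [div_le_iff₀ hd0] at hsum ⊢
  calc _ ≤ _ := hcmp
    _ ≤ ((4 * K + 1) ^ 2 + 1) * (M₀ * d) :=
        mul_le_mul (by gcongr) hsum (Finset.sum_nonneg fun _ _ => diam_nonneg) (by positivity)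
    _ = _ := by ring
end
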